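/- Define E(u) = 4π·H(u) + (1/4)·M(u)·P(u) - (1/2)·M(u)² and B(u) = E(u) - (1/4)|Q(u)|². Then B(u) ≥ 0 for all u ∈ L^{2,1}_E if and only if E(u) ≥ 0 for all u ∈ L^{2,1}_E. -/

import Mathlib

open MeasureTheory

noncomputable def Mfun (u : ℂ → ℂ) : ℝ := ∫ z : ℂ, ‖u z‖ ^ 2
noncomputable def Pfun (u : ℂ → ℂ) : ℝ := ∫ z : ℂ, (‖z‖ ^ 2 - 1) * ‖u z‖ ^ 2
noncomputable def Hfun (u : ℂ → ℂ) : ℝ := (1 / 4) * ∫ z : ℂ, ‖u z‖ ^ 4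
noncomputable def Qfun (u : ℂ → ℂ) : ℂ := ∫ z : ℂ, z * ((‖u z‖ ^ 2 : ℝ) : ℂ)

/-- `E(u) = 4π H(u) + (1/4) M(u) P(u) - (1/2) M(u)²`. -/
noncomputable def Efun (u : ℂ → ℂ) : ℝ :=
  4 * Real.pi * Hfun u + (1 / 4) * (Mfun u * Pfun u) - (1 / 2) * Mfun u ^ 2

/-- `B(u) = E(u) - (1/4)|Q(u)|²`. -/
noncomputable def Bfun (u : ℂ → ℂ) : ℝ := Efun u - (1 / 4) * ‖Qfun u‖ ^ 2

/-- Membership in the weighted Bargmann–Fock space `L^{2,1}_E`. -/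
def MemL21E (u : ℂ → ℂ) : Prop :=
  (∃ f : ℂ → ℂ, Differentiable ℂ f ∧
    ∀ z, u z = ((Real.exp (-‖z‖ ^ 2 / 2) : ℝ) : ℂ) * f z) ∧
  MeasureTheory.Integrable (fun z : ℂ => (1 + ‖z‖ ^ 2) * ‖u z‖ ^ 2)

open Complex ComplexConjugate

/- The magnetic translation `T_α u (z) = e^{i Im(z ᾱ)} u(z - α)` maps `L^{2,1}_E` to itself and
leaves `M` and `H` unchanged, while `P (T_α u) = P u + 2 Re(Q(u) ᾱ) + |α|² M(u)`.  Hence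
`E (T_α u) = E u + (M u / 4) (2 Re(Q(u) ᾱ) + |α|² M(u))`, a quadratic in `α` whose minimum, at
`α = -Q(u)/M(u)`, is `B u`.  So `E ≥ 0` forces `B ≥ 0`, while `B ≤ E` always. -/

lemma MemL21E.continuous {u : ℂ → ℂ} (hu : MemL21E u) : Continuous u := by
  obtain ⟨⟨f, hf, hrep⟩, -⟩ := hu
  have := hf.continuous
  rw [funext hrep]
  fun_prop

lemma MemL21E.integrable_of_norm_le {F : Type*} [NormedAddCommGroup F] {u : ℂ → ℂ}
    (hu : MemL21E u) {f : ℂ → F} (hf : Continuous f) (C : ℝ)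
    (hle : ∀ z, ‖f z‖ ≤ C * ((1 + ‖z‖ ^ 2) * ‖u z‖ ^ 2)) : Integrable f :=
  (hu.2.const_mul C).mono' hf.aestronglyMeasurable (.of_forall hle)

lemma MemL21E.integrable_norm_sq {u : ℂ → ℂ} (hu : MemL21E u) :
    Integrable (fun z => ‖u z‖ ^ 2) := by
  have := hu.continuous
  refine hu.integrable_of_norm_le (by fun_prop) 1 fun z => ?_
  rw [Real.norm_of_nonneg (by positivity), one_mul]
  exact le_mul_of_one_le_left (by positivity) (le_add_of_nonneg_right (by positivity))

lemma MemL21E.integrable_mul_norm_sq {u : ℂ → ℂ} (hu : MemL21E u) :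
    Integrable (fun z : ℂ => z * ((‖u z‖ ^ 2 : ℝ) : ℂ)) := by
  have := hu.continuous
  refine hu.integrable_of_norm_le (by fun_prop) 1 fun z => ?_
  rw [norm_mul, norm_real, Real.norm_of_nonneg (by positivity), one_mul]
  gcongr
  nlinarith [sq_nonneg (‖z‖ - 1)]

lemma MemL21E.integrable_weight_mul_norm_sq {u : ℂ → ℂ} (hu : MemL21E u) :
    Integrable (fun z : ℂ => (‖z‖ ^ 2 - 1) * ‖u z‖ ^ 2) := by
  have := hu.continuous
  refine hu.integrable_of_norm_le (by fun_prop) 1 fun z => ?_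
  rw [norm_mul, norm_pow, norm_norm, Real.norm_eq_abs, one_mul]
  gcongr
  rw [abs_le]
  constructor <;> nlinarith [sq_nonneg ‖z‖]

lemma Qfun_eq_zero_of_Mfun_eq_zero {u : ℂ → ℂ} (hu : MemL21E u) (hM : Mfun u = 0) :
    Qfun u = 0 := by
  have hzero : (fun z => ‖u z‖ ^ 2) =ᵐ[volume] 0 :=
    (integral_eq_zero_iff_of_nonneg (fun _ => sq_nonneg _) hu.integrable_norm_sq).mp hM
  rw [Qfun, integral_congr_ae (g := 0), integral_zero']
  filter_upwards [hzero] with z hz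
  simp [hz]

lemma Bfun_le_Efun (u : ℂ → ℂ) : Bfun u ≤ Efun u :=
  sub_le_self _ (by positivity)

noncomputable def magneticTranslate (α : ℂ) (u : ℂ → ℂ) (z : ℂ) : ℂ :=
  exp (I * (z * conj α).im) * u (z - α)

@[simp]
lemma norm_magneticTranslate (α : ℂ) (u : ℂ → ℂ) (z : ℂ) :
    ‖magneticTranslate α u z‖ = ‖u (z - α)‖ := by
  simp [magneticTranslate, norm_exp]

/-- The phase `e^{i Im(z ᾱ)}` completes the factor `e^{Re(z ᾱ)}` split off from the shifted
Gaussian to the entire function `e^{z ᾱ}`. -/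
lemma gaussian_exponent_sub (z α : ℂ) :
    I * (z * conj α).im + ((-‖z - α‖ ^ 2 / 2 : ℝ) : ℂ)
      = ((-‖z‖ ^ 2 / 2 : ℝ) : ℂ) + (z * conj α - ((‖α‖ ^ 2 : ℝ) : ℂ) / 2) := by
  rw [← normSq_eq_norm_sq, normSq_sub, normSq_eq_norm_sq, normSq_eq_norm_sq]
  nth_rw 3 [← re_add_im (z * conj α)]
  push_cast
  ring

lemma one_add_norm_add_sq_le (w α : ℂ) :
    1 + ‖w + α‖ ^ 2 ≤ (2 + 2 * ‖α‖ ^ 2) * (1 + ‖w‖ ^ 2) := by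
  have := norm_add_le w α
  nlinarith [norm_nonneg (w + α), sq_nonneg (‖w‖ - ‖α‖), mul_nonneg (sq_nonneg ‖α‖) (sq_nonneg ‖w‖)]

lemma MemL21E.magneticTranslate {u : ℂ → ℂ} (hu : MemL21E u) (α : ℂ) :
    MemL21E (magneticTranslate α u) := by
  have hshift : Integrable (fun w => (1 + ‖w + α‖ ^ 2) * ‖u w‖ ^ 2) := by
    have := hu.continuous
    refine hu.integrable_of_norm_le (by fun_prop) (2 + 2 * ‖α‖ ^ 2) fun w => ?_
    rw [Real.norm_of_nonneg (by positivity), ← mul_assoc]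
    gcongr
    exact one_add_norm_add_sq_le w α
  obtain ⟨⟨f, hf, hrep⟩, -⟩ := hu
  refine ⟨⟨fun z => exp (z * conj α - ((‖α‖ ^ 2 : ℝ) : ℂ) / 2) * f (z - α), by fun_prop,
    fun z => ?_⟩, by simpa using hshift.comp_sub_right α⟩
  rw [_root_.magneticTranslate, hrep, ofReal_exp, ofReal_exp, ← mul_assoc, ← exp_add,
    gaussian_exponent_sub, exp_add, mul_assoc]

lemma Mfun_magneticTranslate (α : ℂ) (u : ℂ → ℂ) : Mfun (magneticTranslate α u) = Mfun u := by
  simp only [Mfun, norm_magneticTranslate]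
  exact integral_sub_right_eq_self (fun z => ‖u z‖ ^ 2) α

lemma Hfun_magneticTranslate (α : ℂ) (u : ℂ → ℂ) : Hfun (magneticTranslate α u) = Hfun u := by
  simp only [Hfun, norm_magneticTranslate]
  rw [integral_sub_right_eq_self (fun z => ‖u z‖ ^ 4) α]

lemma Pfun_magneticTranslate {u : ℂ → ℂ} (hu : MemL21E u) (α : ℂ) :
    Pfun (magneticTranslate α u) = Pfun u + 2 * (Qfun u * conj α).re + ‖α‖ ^ 2 * Mfun u := by
  have hshift : Pfun (magneticTranslate α u) = ∫ z, (‖z + α‖ ^ 2 - 1) * ‖u z‖ ^ 2 := by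
    simp only [Pfun, norm_magneticTranslate]
    rw [← integral_sub_right_eq_self (fun z => (‖z + α‖ ^ 2 - 1) * ‖u z‖ ^ 2) α]
    simp
  have hexpand : ∀ z : ℂ, (‖z + α‖ ^ 2 - 1) * ‖u z‖ ^ 2
      = ((‖z‖ ^ 2 - 1) * ‖u z‖ ^ 2 + 2 * (z * ((‖u z‖ ^ 2 : ℝ) : ℂ) * conj α).re)
        + ‖α‖ ^ 2 * ‖u z‖ ^ 2 := fun z => by
    rw [← normSq_eq_norm_sq (z + α), normSq_add, normSq_eq_norm_sq, normSq_eq_norm_sq,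
      mul_right_comm, re_mul_ofReal]
    ring
  have hcross : Integrable (fun z : ℂ => z * ((‖u z‖ ^ 2 : ℝ) : ℂ) * conj α) :=
    hu.integrable_mul_norm_sq.mul_const _
  have hcrossRe : Integrable (fun z : ℂ => 2 * (z * ((‖u z‖ ^ 2 : ℝ) : ℂ) * conj α).re) :=
    hcross.re.const_mul 2
  have hPcross : Integrable (fun z : ℂ =>
      (‖z‖ ^ 2 - 1) * ‖u z‖ ^ 2 + 2 * (z * ((‖u z‖ ^ 2 : ℝ) : ℂ) * conj α).re) :=
    hu.integrable_weight_mul_norm_sq.add hcrossRe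
  have hcrossInt : ∫ z, (z * ((‖u z‖ ^ 2 : ℝ) : ℂ) * conj α).re = (Qfun u * conj α).re := by
    rw [Qfun, ← integral_mul_const]
    exact integral_re hcross
  rw [hshift, integral_congr_ae (.of_forall hexpand),
    integral_add hPcross (hu.integrable_norm_sq.const_mul _),
    integral_add hu.integrable_weight_mul_norm_sq hcrossRe,
    integral_const_mul, integral_const_mul, hcrossInt]
  rfl

lemma Efun_magneticTranslate {u : ℂ → ℂ} (hu : MemL21E u) (α : ℂ) :
    Efun (magneticTranslate α u)
      = Efun u + Mfun u / 4 * (2 * (Qfun u * conj α).re + ‖α‖ ^ 2 * Mfun u) := by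
  simp only [Efun, Hfun_magneticTranslate, Mfun_magneticTranslate, Pfun_magneticTranslate hu]
  ring

lemma Efun_magneticTranslate_neg_Qfun_div_Mfun {u : ℂ → ℂ} (hu : MemL21E u) (hM : Mfun u ≠ 0) :
    Efun (magneticTranslate (-Qfun u / Mfun u) u) = Bfun u := by
  have hcross : (Qfun u * conj (-Qfun u / Mfun u)).re = -‖Qfun u‖ ^ 2 / Mfun u := by
    rw [map_div₀, map_neg, conj_ofReal, mul_div_assoc', mul_neg, mul_conj, ← ofReal_neg,
      ← ofReal_div, ofReal_re, normSq_eq_norm_sq]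
  have hnorm : ‖-Qfun u / Mfun u‖ ^ 2 = ‖Qfun u‖ ^ 2 / Mfun u ^ 2 := by
    rw [norm_div, norm_neg, norm_real, Real.norm_eq_abs, div_pow, sq_abs]
  rw [Efun_magneticTranslate hu, hcross, hnorm, Bfun]
  field_simp
  ring

lemma exists_MemL21E_Efun_eq_Bfun {u : ℂ → ℂ} (hu : MemL21E u) :
    ∃ v, MemL21E v ∧ Efun v = Bfun u := by
  by_cases hM : Mfun u = 0
  · refine ⟨u, hu, ?_⟩
    rw [Bfun, Qfun_eq_zero_of_Mfun_eq_zero hu hM, norm_zero]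
    ring
  · exact ⟨_, hu.magneticTranslate _, Efun_magneticTranslate_neg_Qfun_div_Mfun hu hM⟩

/-- `B ≥ 0` on `L^{2,1}_E` if and only if `E ≥ 0` on `L^{2,1}_E`. -/
theorem stmt14 :
    (∀ u : ℂ → ℂ, MemL21E u → 0 ≤ Bfun u) ↔ (∀ u : ℂ → ℂ, MemL21E u → 0 ≤ Efun u) := by
  refine ⟨fun hB u hu => (hB u hu).trans (Bfun_le_Efun u), fun hE u hu => ?_⟩
  obtain ⟨v, hv, hEv⟩ := exists_MemL21E_Efun_eq_Bfun hu
  exact hEv ▸ hE v hv
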